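/- Let v₁ = (0,0,0), v₂ = (1000,0,0), v₃ = (164,549,0), v₄ = (505,−391,−14), v₅ = (495,435,−577), v₆ = (169,256,351), v₇ = (292,−306,−467), v₈ = (−74,362,181), v₉ = (616,−295,−123), v₁₀ = (572,609,−549) in ℝ³, and define edge vectors eᵢ = v_{i+1} − vᵢ for i = 1, …, 9 and e₁₀ = v₁ − v₁₀. Then there is no w ∈ ℝ³ such that (−1)^{i+1} (w · eᵢ) > 0 for every i ∈ {1, …, 10}. -/

import Mathlib

/-- The vertices of the paper's 10-stick polygonal realization of the knot `8_14`.
Here `vert8_14 i` is the paper's vertex `v_(i+1)`. -/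
noncomputable def vert8_14 : Fin 10 → (Fin 3 → ℝ) :=
  ![![0, 0, 0], ![1000, 0, 0], ![164, 549, 0], ![505, -391, -14], ![495, 435, -577], ![169, 256, 351], ![292, -306, -467], ![-74, 362, 181], ![616, -295, -123], ![572, 609, -549]]

/-- The edge vectors `eᵢ = v_(i+1) − vᵢ` (cyclically, so `e₁₀ = v₁ − v₁₀`);
here `edge8_14 i` is the paper's `e_(i+1)`, using wrap-around addition on `Fin 10`. -/
noncomputable def edge8_14 (i : Fin 10) : Fin 3 → ℝ :=
  vert8_14 (i + 1) - vert8_14 i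

open Matrix

/-- The easy half of Gordan's alternative. -/
theorem not_exists_forall_pos_dotProduct_of_sum_smul_eq_zero {R ι n : Type*} [CommRing R]
    [LinearOrder R] [IsStrictOrderedRing R] [Fintype ι] [Fintype n] (v : ι → n → R) (c : ι → R)
    (hc : 0 ≤ c) (hc0 : c ≠ 0) (hsum : ∑ i, c i • v i = 0) :
    ¬ ∃ w : n → R, ∀ i, 0 < w ⬝ᵥ v i := by
  rintro ⟨w, hw⟩
  obtain ⟨k, hk⟩ := Function.ne_iff.mp hc0
  have hpos : 0 < ∑ i, c i * (w ⬝ᵥ v i) :=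
    Finset.sum_pos' (fun i _ => mul_nonneg (hc i) (hw i).le)
      ⟨k, Finset.mem_univ k, mul_pos (lt_of_le_of_ne (hc k) (Ne.symm hk)) (hw k)⟩
  have hzero : ∑ i, c i * (w ⬝ᵥ v i) = 0 :=
    calc ∑ i, c i * (w ⬝ᵥ v i) = w ⬝ᵥ ∑ i, c i • v i := by
          simp only [dotProduct_sum, dotProduct_smul, smul_eq_mul]
      _ = 0 := by rw [hsum, dotProduct_zero]
  exact hpos.ne' hzero

/-- Already the four signed edges `e₁, e₃, -e₈, e₉` are positively dependent; these weights
span the kernel of the `3 × 4` matrix they form. -/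
noncomputable def gordanWeights8_14 : Fin 10 → ℝ :=
  ![2161059, 0, 11093960, 0, 0, 0, 0, 8261920, 5531240, 0]

theorem sum_gordanWeights8_14_smul_signed_edge :
    ∑ i, gordanWeights8_14 i • ((-1 : ℝ) ^ (i : ℕ) • edge8_14 i) = 0 := by
  ext j
  fin_cases j <;> simp [Fin.sum_univ_succ, gordanWeights8_14, edge8_14, vert8_14] <;> norm_num

/-- There is no `w ∈ ℝ³` such that `(−1)^(i+1) (w · eᵢ) > 0` for every
`i ∈ {1, …, 10}`: no projection of this polygon (the knot `8_14`) to a line has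
5 local maxima. (With 0-based indexing `i : Fin 10`, the sign is `(−1)^i`.) -/
theorem no_alternating_direction_8_14 :
    ¬ ∃ w : Fin 3 → ℝ, ∀ i : Fin 10,
        0 < (-1 : ℝ) ^ (i : ℕ) * ∑ j : Fin 3, w j * edge8_14 i j := by
  rintro ⟨w, hw⟩
  refine not_exists_forall_pos_dotProduct_of_sum_smul_eq_zero _ gordanWeights8_14 ?_ ?_
    sum_gordanWeights8_14_smul_signed_edge ⟨w, fun i => ?_⟩
  · intro i
    fin_cases i <;> simp [gordanWeights8_14]
  · exact Function.ne_iff.mpr ⟨0, by simp [gordanWeights8_14]⟩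
  · rw [dotProduct_smul, smul_eq_mul]
    exact hw i
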